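/- arXiv:1312.5491 — 3 statements merged into one kernel-verified Lean document; each statement's English description precedes it below -/
import Mathlib

section
/- Let 0 < ε < 1, δ > 0, B > 0 with δB = ε³/16, and let a_0, a_1, ..., a_n be nonnegative reals (with a_{-1} = a_{-2} = 0 by convention) satisfying ε·a_k ≤ a_{k+1} + δB(a_k + a_{k-1} + a_{k-2}) for all 0 ≤ k ≤ n−1. Then there is a constant C depending only on n such that a_k ≤ (C/εⁿ)·a_n for every 0 ≤ k ≤ n−1; in fact a_k ≤ d_{k+1}···d_n·a_n where d_j is defined by d_0 = 0, 1/d_1 = ε − δB, 1/d_{j+1} = ε − δB(1 + d_j + d_{j-1}d_j), and each d_j satisfies ε⁻¹ < d_j < 2ε⁻¹, so a_k ≤ 2ⁿ ε^{-n} a_n. -/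
/-- From the recursive inequalities `ε a_k ≤ a_{k+1} + δB(a_k + a_{k-1} + a_{k-2})`
(with `a_{-1} = a_{-2} = 0` and `δB = ε³/16`) one gets
`a_k ≤ d_{k+1} ⋯ d_n a_n ≤ 2ⁿ ε^{-n} a_n` for `0 ≤ k ≤ n-1`, where the `d_j`
are defined by `d_0 = 0`, `1/d_1 = ε − δB`, `1/d_{j+1} = ε − δB(1 + d_j + d_{j-1} d_j)`,
and satisfy `ε⁻¹ < d_j < 2 ε⁻¹`. -/
theorem stmt_1 (n : ℕ) (hn : 1 ≤ n) (ε δ B : ℝ)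
    (hε0 : 0 < ε) (hε1 : ε < 1) (hδ : 0 < δ) (hB : 0 < B)
    (hδB : δ * B = ε ^ 3 / 16)
    (a : ℤ → ℝ) (ha1 : a (-1) = 0) (ha2 : a (-2) = 0)
    (hpos : ∀ k : ℤ, 0 ≤ k → k ≤ n → 0 ≤ a k)
    (hineq : ∀ k : ℤ, 0 ≤ k → k ≤ (n : ℤ) - 1 →
      ε * a k ≤ a (k + 1) + δ * B * (a k + a (k - 1) + a (k - 2)))
    (d : ℕ → ℝ) (hd0 : d 0 = 0)
    (hd1 : d 1 = (ε - δ * B)⁻¹)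
    (hrec : ∀ j : ℕ, 1 ≤ j →
      d (j + 1) = (ε - δ * B * (1 + d j + d (j - 1) * d j))⁻¹) :
    (∀ j : ℕ, 1 ≤ j → ε⁻¹ < d j ∧ d j < 2 * ε⁻¹) ∧
    (∀ k : ℕ, k ≤ n - 1 →
      a k ≤ (∏ j ∈ Finset.Icc (k + 1) n, d j) * a n ∧
      a k ≤ 2 ^ n * ε ^ (-(n : ℝ)) * a n) := by
  have hεinv : (0:ℝ) < ε⁻¹ := by positivity
  have hmulinv : ε * ε⁻¹ = 1 := mul_inv_cancel₀ hε0.ne'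
  have hεinv1 : (1:ℝ) ≤ ε⁻¹ := by nlinarith
  have hδB0 : (0:ℝ) < δ * B := mul_pos hδ hB
  -- key estimate on the denominators
  have key : ∀ x : ℝ, 1 ≤ x → x ≤ 7 * ε⁻¹ ^ 2 →
      ε⁻¹ < (ε - δ * B * x)⁻¹ ∧ (ε - δ * B * x)⁻¹ < 2 * ε⁻¹ := by
    intro x hx1 hx2
    have hx0 : 0 < δ * B * x := by nlinarith
    have h3 : ε ^ 3 * ε⁻¹ ^ 2 = ε := by
      field_simp
    have hup : δ * B * x < ε / 2 := by
      rw [hδB]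
      nlinarith [pow_pos hε0 3]
    have hden1 : ε / 2 < ε - δ * B * x := by linarith
    have hden0 : 0 < ε - δ * B * x := by linarith
    have hden2 : ε - δ * B * x < ε := by linarith
    constructor
    · exact (inv_strictAnti₀ hden0 hden2)
    · have h4 : (ε - δ * B * x)⁻¹ < (ε / 2)⁻¹ := inv_strictAnti₀ (by positivity) hden1
      have h5 : (ε / 2)⁻¹ = 2 * ε⁻¹ := by
        field_simp
      linarith [h4, h5.symm.le, h5.le]
  -- bounds on the d_j
  have hdb : ∀ j : ℕ, 1 ≤ j → ε⁻¹ < d j ∧ d j < 2 * ε⁻¹ := by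
    intro j
    induction j using Nat.strong_induction_on with
    | _ j ih =>
      intro hj
      match j, hj with
      | 1, _ =>
        have h := key 1 le_rfl (by nlinarith)
        rw [hd1]
        simpa using h
      | (m+2), _ =>
        have h1 := ih (m+1) (by omega) (by omega)
        have hm0 : 0 ≤ d m ∧ d m ≤ 2 * ε⁻¹ := by
          rcases Nat.eq_zero_or_pos m with h | h
          · subst h
            exact ⟨le_of_eq hd0.symm, by rw [hd0]; positivity⟩
          · have h2 := ih m (by omega) h
            exact ⟨by linarith [h2.1], h2.2.le⟩
        have hrw := hrec (m+1) (by omega)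
        simp only [Nat.add_sub_cancel] at hrw
        rw [hrw]
        refine key _ ?_ ?_
        · nlinarith [h1.1, hm0.1, hεinv]
        · nlinarith [h1.1, h1.2, hm0.1, hm0.2, hεinv, hεinv1]
  have dpos : ∀ j : ℕ, 1 ≤ j → 0 < d j := fun j hj => lt_trans hεinv (hdb j hj).1
  -- step lemma
  have step : ∀ c x y : ℝ, 0 < c → c * x ≤ y → x ≤ c⁻¹ * y := by
    intro c x y hc h
    calc x = c⁻¹ * (c * x) := by field_simp
    _ ≤ c⁻¹ * y := mul_le_mul_of_nonneg_left h (inv_nonneg.2 hc.le)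
  -- one-step inequality a_k ≤ d_{k+1} a_{k+1}
  have hQ : ∀ k : ℕ, (k : ℤ) ≤ (n : ℤ) - 1 → a k ≤ d (k+1) * a ((k : ℤ) + 1) := by
    intro k
    induction k using Nat.strong_induction_on with
    | _ k ih =>
      intro hk
      match k with
      | 0 =>
        have h := hineq 0 le_rfl hk
        norm_num [ha1, ha2] at h
        have hd1pos : (0:ℝ) < ε - δ * B := by
          have h2 := (hdb 1 le_rfl).1
          rw [hd1] at h2
          exact inv_pos.mp (lt_trans hεinv h2)
        have h2 : (ε - δ * B) * a 0 ≤ a 1 := by nlinarith [h]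
        rw [hd1]
        push_cast
        exact step _ _ _ hd1pos h2
      | 1 =>
        have hq0 : a 0 ≤ d 1 * a 1 := by
          have := ih 0 (by omega) (by omega)
          push_cast at this ⊢
          exact this
        have h := hineq 1 (by norm_num) hk
        norm_num [ha1] at h
        have hrw := hrec 1 le_rfl
        norm_num [hd0] at hrw
        have hden : 0 < ε - δ * B * (1 + d 1) := by
          have h2 := (hdb 2 (by norm_num)).1
          rw [hrw] at h2
          exact inv_pos.mp (lt_trans hεinv h2)
        have t1 : δ * B * a 0 ≤ δ * B * (d 1 * a 1) :=
          mul_le_mul_of_nonneg_left hq0 hδB0.le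
        have h2 : (ε - δ * B * (1 + d 1)) * a 1 ≤ a 2 := by ring_nf at h t1 ⊢; linarith
        rw [hrw]
        push_cast
        norm_num
        exact step _ _ _ hden h2
      | (m+2) =>
        have hm1 : ((m:ℤ) + 1) ≤ (n : ℤ) - 1 := by omega
        have hm0 : (m:ℤ) ≤ (n : ℤ) - 1 := by omega
        have hA : a ((m:ℤ) + 1) ≤ d (m+2) * a ((m:ℤ) + 2) := by
          have := ih (m+1) (by omega) (by push_cast; omega)
          push_cast at this ⊢
          convert this using 3 <;> ring
        have hBm : a (m:ℤ) ≤ d (m+1) * a ((m:ℤ) + 1) := by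
          have := ih m (by omega) hm0
          exact this
        have hB2 : a (m:ℤ) ≤ d (m+1) * (d (m+2) * a ((m:ℤ) + 2)) := by
          calc a (m:ℤ) ≤ d (m+1) * a ((m:ℤ) + 1) := hBm
          _ ≤ d (m+1) * (d (m+2) * a ((m:ℤ) + 2)) :=
            mul_le_mul_of_nonneg_left hA (dpos (m+1) (by omega)).le
        have h := hineq ((m:ℤ) + 2) (by omega) (by push_cast at hk ⊢; omega)
        have e1 : (m:ℤ) + 2 - 1 = (m:ℤ) + 1 := by ring
        have e2 : (m:ℤ) + 2 - 2 = (m:ℤ) := by ring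
        rw [e1, e2] at h
        have hrw := hrec (m+2) (by omega)
        have hden : 0 < ε - δ * B * (1 + d (m+2) + d (m+1) * d (m+2)) := by
          have h2 := (hdb (m+3) (by omega)).1
          rw [show m+3 = (m+2)+1 from rfl, hrw] at h2
          exact inv_pos.mp (lt_trans hεinv h2)
        have t1 : δ * B * a ((m:ℤ)+1) ≤ δ * B * (d (m+2) * a ((m:ℤ)+2)) :=
          mul_le_mul_of_nonneg_left hA hδB0.le
        have t2 : δ * B * a (m:ℤ) ≤ δ * B * (d (m+1) * (d (m+2) * a ((m:ℤ)+2))) :=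
          mul_le_mul_of_nonneg_left hB2 hδB0.le
        have h2 : (ε - δ * B * (1 + d (m+2) + d (m+1) * d (m+2))) * a ((m:ℤ)+2)
            ≤ a ((m:ℤ) + 2 + 1) := by ring_nf at h t1 t2 ⊢; linarith
        have goal : a ((m:ℤ)+2) ≤ d (m+3) * a ((m:ℤ) + 2 + 1) := by
          rw [show m+3 = (m+2)+1 from rfl, hrw]
          exact step _ _ _ hden h2
        push_cast at goal ⊢
        convert goal using 3 <;> ring
  -- product bound
  have main : ∀ m : ℕ, ∀ k : ℕ, k + m = n → 1 ≤ m →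
      a k ≤ (∏ j ∈ Finset.Icc (k + 1) n, d j) * a n := by
    intro m
    induction m with
    | zero => intro k h h1; omega
    | succ p ihm =>
      intro k hkm _
      have hq : a k ≤ d (k+1) * a ((k:ℤ) + 1) := hQ k (by omega)
      rcases Nat.eq_zero_or_pos p with hp | hp
      · subst hp
        have hkn : k + 1 = n := by omega
        rw [← hkn]
        rw [Finset.Icc_self, Finset.prod_singleton]
        have : ((k:ℤ) + 1) = ((k+1 : ℕ) : ℤ) := by push_cast; ring
        rw [this] at hq
        rw [hkn] at hq ⊢
        exact hq
      · have ih' := ihm (k+1) (by omega) hp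
        have hsplit : Finset.Icc (k+1) n = insert (k+1) (Finset.Icc (k+2) n) := by
          ext x
          simp only [Finset.mem_Icc, Finset.mem_insert]
          omega
        have hnot : k + 1 ∉ Finset.Icc (k+2) n := by simp
        rw [hsplit, Finset.prod_insert hnot]
        have hcast : a ((k:ℤ) + 1) = a ((k+1 : ℕ) : ℤ) := by norm_cast
        calc a k ≤ d (k+1) * a ((k+1:ℕ) : ℤ) := by rw [← hcast]; exact hq
        _ ≤ d (k+1) * ((∏ j ∈ Finset.Icc (k+2) n, d j) * a n) :=
            mul_le_mul_of_nonneg_left ih' (dpos (k+1) (by omega)).le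
        _ = d (k+1) * (∏ j ∈ Finset.Icc (k+2) n, d j) * a n := by ring
  refine ⟨hdb, ?_⟩
  intro k hk
  have h1 := main (n - k) k (by omega) (by omega)
  refine ⟨h1, ?_⟩
  have han : 0 ≤ a n := hpos n (by positivity) le_rfl
  have hpn : (∏ j ∈ Finset.Icc (k+1) n, d j) ≤ (2 * ε⁻¹) ^ n := by
    calc (∏ j ∈ Finset.Icc (k+1) n, d j)
        ≤ ∏ j ∈ Finset.Icc (k+1) n, (2 * ε⁻¹) := by
          refine Finset.prod_le_prod ?_ ?_
          · intro j hj
            simp only [Finset.mem_Icc] at hj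
            exact (dpos j (by omega)).le
          · intro j hj
            simp only [Finset.mem_Icc] at hj
            exact (hdb j (by omega)).2.le
      _ = (2 * ε⁻¹) ^ (Finset.Icc (k+1) n).card := (Finset.prod_const _)
      _ ≤ (2 * ε⁻¹) ^ n := by
          apply pow_le_pow_right₀ (by linarith)
          rw [Nat.card_Icc]; omega
  have hrpow : (2:ℝ) ^ n * ε ^ (-(n : ℝ)) = (2 * ε⁻¹) ^ n := by
    rw [Real.rpow_neg hε0.le, Real.rpow_natCast, ← inv_pow, mul_pow]
  rw [hrpow]
  calc a k ≤ (∏ j ∈ Finset.Icc (k+1) n, d j) * a n := h1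
  _ ≤ (2 * ε⁻¹) ^ n * a n := mul_le_mul_of_nonneg_right hpn han
end

section
/- Let a : (0, ε₀) → (0, ∞) be an increasing function, left-continuous (lim_{t→s⁻} a(t) = a(s)), let g be a positive increasing function, and suppose that for all 0 < s, t with s + t < ε₀, t ≤ a(s+t)/(a(s)·g(1/a(s+t))). Fix 0 < D < ε₀ and define s₀ = sup{ 0 < s < D : a(D) > e·a(s) }. Then s₀ < D and D − s₀ ≤ e/g(1/a(D)). -/
/-!
Left-continuity of `a` at `D` keeps `e · a(s)` above `a(D)` on a left neighbourhood of `D`,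
so the supremum `s₀` stays below `D`. For every `s ∈ (s₀, D)` the reverse inequality
`a(D) ≤ e · a(s)` holds, and the functional inequality with `t = D - s` gives
`D - s ≤ a(D) / (a(s) g(1/a(D))) ≤ e / g(1/a(D))`; letting `s → s₀⁺` bounds `D - s₀`.
-/

open Real Set Filter Topology

theorem sSup_lt_of_eventually_notMem {S : Set ℝ} {D : ℝ} (hD : 0 < D) (hS : S ⊆ Iio D)
    (h : ∀ᶠ t in 𝓝[<] D, t ∉ S) : sSup S < D := by
  obtain ⟨l, hlD, hl⟩ := (mem_nhdsLT_iff_exists_Ioo_subset' (sub_one_lt D)).1 h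
  refine (Real.sSup_le (fun x hx => ?_) (le_max_right l 0)).trans_lt (max_lt hlD hD)
  by_contra hxl
  exact hl ⟨(le_max_left l 0).trans_lt (not_le.1 hxl), hS hx⟩ hx

theorem sub_le_of_forall_mem_Ioo {x D c : ℝ} (hxD : x < D) (h : ∀ s ∈ Ioo x D, D - s ≤ c) :
    D - x ≤ c := by
  have : D - c ≤ sInf (Ioo x D) :=
    le_csInf (nonempty_Ioo.2 hxD) fun s hs => by linarith [h s hs]
  rw [csInf_Ioo hxD] at this
  linarith

theorem sub_le_div_of_le_mul {ε₀ D s K : ℝ} {a g : ℝ → ℝ}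
    (hfun : ∀ s t : ℝ, 0 < s → 0 < t → s + t < ε₀ →
      t ≤ a (s + t) / (a s * g (1 / a (s + t))))
    (hs : 0 < s) (hsD : s < D) (hDε : D < ε₀) (has : 0 < a s) (hg : 0 < g (1 / a D))
    (hle : a D ≤ K * a s) : D - s ≤ K / g (1 / a D) :=
  calc D - s ≤ a D / (a s * g (1 / a D)) := by
        simpa using hfun s (D - s) hs (sub_pos.2 hsD) (by simpa using hDε)
    _ = a D / a s / g (1 / a D) := (div_div _ _ _).symm
    _ ≤ K / g (1 / a D) := by gcongr; exact (div_le_iff₀ has).2 hle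

theorem stmt_11_general (ε₀ : ℝ) (a g : ℝ → ℝ)
    (hapos : ∀ s : ℝ, 0 < s → s < ε₀ → 0 < a s)
    (haleft : ∀ s : ℝ, 0 < s → s < ε₀ →
      Filter.Tendsto a (nhdsWithin s (Set.Iio s)) (nhds (a s)))
    (hgpos : ∀ x : ℝ, 0 < x → 0 < g x)
    (hfun : ∀ s t : ℝ, 0 < s → 0 < t → s + t < ε₀ →
      t ≤ a (s + t) / (a s * g (1 / a (s + t))))
    (D : ℝ) (hD0 : 0 < D) (hDε : D < ε₀)
    (s₀ : ℝ) (hs₀ : s₀ = sSup {s : ℝ | 0 < s ∧ s < D ∧ exp 1 * a s < a D}) :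
    s₀ < D ∧ D - s₀ ≤ exp 1 / g (1 / a D) := by
  set S := {s : ℝ | 0 < s ∧ s < D ∧ exp 1 * a s < a D}
  have haD : 0 < a D := hapos D hD0 hDε
  have hs₀D : s₀ < D := by
    rw [hs₀]
    refine sSup_lt_of_eventually_notMem hD0 (fun s hs => hs.2.1) ?_
    filter_upwards [(haleft D hD0 hDε).eventually_const_lt
      (div_lt_self haD (one_lt_exp_iff.2 one_pos))] with t ht htS
    exact htS.2.2.not_ge ((div_lt_iff₀' (exp_pos 1)).1 ht).le
  refine ⟨hs₀D, sub_le_of_forall_mem_Ioo hs₀D ?_⟩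
  rintro s ⟨hs₀s, hsD⟩
  have hs : 0 < s := lt_of_le_of_lt (hs₀ ▸ Real.sSup_nonneg fun x (hx : x ∈ S) => hx.1.le) hs₀s
  have hsS : s ∉ S := fun hsS => (le_csSup ⟨D, fun x hx => hx.2.1.le⟩ hsS).not_gt (hs₀ ▸ hs₀s)
  exact sub_le_div_of_le_mul hfun hs hsD hDε (hapos s hs (hsD.trans hDε))
    (hgpos _ (by positivity)) (not_lt.1 fun h => hsS ⟨hs, hsD, h⟩)

/-- Key step in the proof of Theorem 5.4: if `a : (0,ε₀) → (0,∞)` is increasing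
and left-continuous, `g` is positive increasing, and
`t ≤ a(s+t)/(a(s)·g(1/a(s+t)))` for all `0 < s, t` with `s + t < ε₀`, then with
`s₀ = sup{0 < s < D : a(D) > e·a(s)}` one has `s₀ < D` and
`D − s₀ ≤ e / g(1/a(D))`. -/
theorem stmt_11 (ε₀ : ℝ) (hε₀ : 0 < ε₀) (a g : ℝ → ℝ)
    (hapos : ∀ s : ℝ, 0 < s → s < ε₀ → 0 < a s)
    (hamono : MonotoneOn a (Set.Ioo 0 ε₀))
    (haleft : ∀ s : ℝ, 0 < s → s < ε₀ →
      Filter.Tendsto a (nhdsWithin s (Set.Iio s)) (nhds (a s)))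
    (hgpos : ∀ x : ℝ, 0 < x → 0 < g x)
    (hgmono : MonotoneOn g (Set.Ioi (0 : ℝ)))
    (hfun : ∀ s t : ℝ, 0 < s → 0 < t → s + t < ε₀ →
      t ≤ a (s + t) / (a s * g (1 / a (s + t))))
    (D : ℝ) (hD0 : 0 < D) (hDε : D < ε₀)
    (s₀ : ℝ) (hs₀ : s₀ = sSup {s : ℝ | 0 < s ∧ s < D ∧ exp 1 * a s < a D}) :
    s₀ < D ∧ D - s₀ ≤ exp 1 / g (1 / a D) :=
  stmt_11_general ε₀ a g hapos haleft hgpos hfun D hD0 hDε s₀ hs₀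
end

section
/- Let a : (0, ε₀) → (0, ∞) be increasing, g : (0,∞) → (0,∞) increasing, and suppose for all 0 < s, t < ε₀ with s + t < ε₀ that t·a(s) ≤ a(s+t)/g(1/a(s+t)). Fix 0 < D < ε₀ and define s₀ = sup{0 < s < D : a(D) > e·a(s)} and inductively s_{j+1} = sup{0 < s < s_j : a(s_j) > e·a(s)}. Then D ≤ 3e/g(1/a(D)) + (2e²/(e−1))·∫_{1/a(D)}^∞ dx/(x·g(x)), provided x·g(x) is increasing and the integral is finite. -/
/-!
Fix `q > 1` and let `t j` be the supremum of the `s ∈ (0, D)` with `a s ≤ q⁻ʲ a(D)` (a variant of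
the `s_j` of the statement, with every threshold measured from `a(D)`), so `t 0 = D`, `t j → 0`.
If `a s' ≤ q⁻ʲ a(D)` and `s' - s > q / g(qʲ / a D)`, the functional inequality with `t = s' - s`
forces `a s ≤ q⁻ʲ⁻¹ a(D)`; hence `t j ≤ t (j + 1) + q / g(qʲ / a D)` and, telescoping,
`D ≤ ∑ⱼ q / g(qʲ / a D)`. Since `1 / (x g x)` is decreasing, the term of index `j + 1` is at most
`q² / (q - 1)` times the integral of `1 / (x g x)` over `(qʲ / a D, qʲ⁺¹ / a D]`. For `q = e` this
is sharper than the stated bound.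
-/

open MeasureTheory Real Set Finset

theorem sum_sub_mul_le_setIntegral_Ioi {f : ℝ → ℝ} {x : ℕ → ℝ} (hx : Monotone x)
    (hf : AntitoneOn f (Ioi (x 0))) (hf0 : ∀ y ∈ Ioi (x 0), 0 ≤ f y)
    (hint : IntegrableOn f (Ioi (x 0))) (N : ℕ) :
    ∑ j ∈ range N, (x (j + 1) - x j) * f (x (j + 1)) ≤ ∫ y in Ioi (x 0), f y := by
  have hIoc : ∀ j, Ioc (x j) (x (j + 1)) ⊆ Ioi (x 0) := fun j _ hy =>
    (hx (Nat.zero_le j)).trans_lt hy.1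
  calc ∑ j ∈ range N, (x (j + 1) - x j) * f (x (j + 1))
      ≤ ∑ j ∈ range N, ∫ y in x j..x (j + 1), f y := by
        gcongr with j
        rw [intervalIntegral.integral_of_le (hx j.le_succ),
          ← Real.volume_real_Ioc_of_le (hx j.le_succ), mul_comm]
        refine setIntegral_ge_of_const_le_real measurableSet_Ioc measure_Ioc_lt_top.ne
          (fun y hy => hf (hIoc j hy) (hIoc j ⟨hy.1.trans_le hy.2, le_rfl⟩) hy.2)
          (hint.mono_set (hIoc j))
    _ = ∫ y in x 0..x N, f y := intervalIntegral.sum_integral_adjacent_intervals fun j _ =>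
        (intervalIntegrable_iff_integrableOn_Ioc_of_le (hx j.le_succ)).2 (hint.mono_set (hIoc j))
    _ ≤ ∫ y in Ioi (x 0), f y := by
        rw [intervalIntegral.integral_of_le (hx (Nat.zero_le N))]
        exact setIntegral_mono_set hint
          ((ae_restrict_mem measurableSet_Ioi).mono hf0) Ioc_subset_Ioi_self.eventuallyLE

theorem sum_div_le_integral_one_div_mul {g : ℝ → ℝ} (hgpos : ∀ x : ℝ, 0 < x → 0 < g x)
    (hxg : MonotoneOn (fun x => x * g x) (Ioi 0)) {x₀ q : ℝ} (hx₀ : 0 < x₀) (hq : 1 < q)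
    (hint : IntegrableOn (fun x => 1 / (x * g x)) (Ioi x₀)) (N : ℕ) :
    ∑ j ∈ range N, q / g (q ^ (j + 1) * x₀) ≤ q ^ 2 / (q - 1) * ∫ x in Ioi x₀, 1 / (x * g x) := by
  have hpos : ∀ x ∈ Ioi x₀, 0 < x * g x := fun x hx =>
    mul_pos (hx₀.trans hx) (hgpos x (hx₀.trans hx))
  have hanti : AntitoneOn (fun x => 1 / (x * g x)) (Ioi x₀) := fun u hu v hv huv =>
    one_div_le_one_div_of_le (hpos u hu) (hxg (hx₀.trans hu) (hx₀.trans hv) huv)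
  have hgeom : Monotone fun j : ℕ => q ^ j * x₀ := fun _ _ hij =>
    mul_le_mul_of_nonneg_right (pow_le_pow_right₀ hq.le hij) hx₀.le
  have hterm : ∀ j : ℕ, q / g (q ^ (j + 1) * x₀) = q ^ 2 / (q - 1) *
      ((q ^ (j + 1) * x₀ - q ^ j * x₀) * (1 / (q ^ (j + 1) * x₀ * g (q ^ (j + 1) * x₀)))) := by
    intro j
    have hg : 0 < g (q ^ (j + 1) * x₀) := hgpos _ (by positivity)
    have hq1 : q - 1 ≠ 0 := by linarith
    field_simp
    ring
  simp only [hterm, ← mul_sum]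
  refine mul_le_mul_of_nonneg_left ?_ (div_nonneg (sq_nonneg q) (by linarith))
  have key := sum_sub_mul_le_setIntegral_Ioi (f := fun x => 1 / (x * g x)) hgeom
    (by rwa [pow_zero, one_mul])
    (by rw [pow_zero, one_mul]; exact fun x hx => one_div_nonneg.2 (hpos x hx).le)
    (by rwa [pow_zero, one_mul]) N
  simpa only [pow_zero, one_mul] using key

def sublevelSet (a : ℝ → ℝ) (D q : ℝ) (j : ℕ) : Set ℝ := {s ∈ Ioo 0 D | a s * q ^ j ≤ a D}

noncomputable def sublevelSup (a : ℝ → ℝ) (D q : ℝ) (j : ℕ) : ℝ := sSup (sublevelSet a D q j)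

section Sublevel

variable {a g : ℝ → ℝ} {D q : ℝ}

theorem sublevelSup_nonneg (j : ℕ) : 0 ≤ sublevelSup a D q j :=
  Real.sSup_nonneg fun _ hs => hs.1.1.le

theorem bddAbove_sublevelSet (j : ℕ) : BddAbove (sublevelSet a D q j) :=
  ⟨D, fun _ hs => hs.1.2.le⟩

theorem sublevelSup_zero (hD : 0 < D) (hamono : MonotoneOn a (Ioc 0 D)) :
    sublevelSup a D q 0 = D := by
  have : sublevelSet a D q 0 = Ioo 0 D := by
    ext s
    simp only [sublevelSet, pow_zero, mul_one, mem_ofPred_eq, and_iff_left_iff_imp]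
    exact fun hs => hamono ⟨hs.1, hs.2.le⟩ ⟨hD, le_rfl⟩ hs.2.le
  rw [sublevelSup, this, csSup_Ioo hD]

theorem exists_sublevelSup_le (hq : 1 < q) (hD : 0 < D) (hapos : ∀ s ∈ Ioc 0 D, 0 < a s)
    (hamono : MonotoneOn a (Ioc 0 D)) {δ : ℝ} (hδ : 0 < δ) : ∃ N, sublevelSup a D q N ≤ δ := by
  have hδ' : min δ D ∈ Ioc 0 D := ⟨lt_min hδ hD, min_le_right δ D⟩
  obtain ⟨N, hN⟩ := pow_unbounded_of_one_lt (a D / a (min δ D)) hq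
  rw [div_lt_iff₀ (hapos _ hδ')] at hN
  refine ⟨N, Real.sSup_le (fun s hs => ?_) hδ.le⟩
  by_contra! hδs
  have has : a (min δ D) ≤ a s :=
    hamono hδ' ⟨hs.1.1, hs.1.2.le⟩ ((min_le_left δ D).trans hδs.le)
  nlinarith [hs.2, pow_nonneg (zero_le_one.trans hq.le) N]

theorem mem_sublevelSet_succ (hq : 0 < q) (hapos : ∀ s ∈ Ioc 0 D, 0 < a s)
    (hgpos : ∀ x : ℝ, 0 < x → 0 < g x) (hgmono : MonotoneOn g (Ioi 0))
    (hfun : ∀ s t : ℝ, 0 < s → 0 < t → s + t < D → t * a s ≤ a (s + t) / g (1 / a (s + t)))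
    {j : ℕ} {s s' : ℝ} (hs' : s' ∈ sublevelSet a D q j) (hs : 0 < s)
    (hss' : s + q / g (q ^ j / a D) < s') : s ∈ sublevelSet a D q (j + 1) := by
  obtain ⟨⟨hs'0, hs'D⟩, hs'a⟩ := hs'
  set X := q ^ j / a D
  have haD := hapos D ⟨hs'0.trans hs'D, le_rfl⟩
  have has' := hapos s' ⟨hs'0, hs'D.le⟩
  have hXpos : 0 < X := by positivity
  have hgX := hgpos X hXpos
  have hgap : q < (s' - s) * g X := (div_lt_iff₀ hgX).1 (by linarith)
  have hss : s < s' := by linarith [div_pos hq hgX]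
  have has := hapos s ⟨hs, (hss.trans hs'D).le⟩
  have hX : X ≤ 1 / a s' := by rw [div_le_div_iff₀ haD has']; linarith
  have hfun' := hfun s (s' - s) hs (by linarith) (by linarith)
  rw [add_sub_cancel] at hfun'
  have hrhs : a s' / g (1 / a s') ≤ a D / q ^ j / g X :=
    div_le_div₀ (by positivity) (by rw [le_div_iff₀ (by positivity)]; linarith) hgX
      (hgmono hXpos (hXpos.trans_le hX) hX)
  refine ⟨⟨hs, hss.trans hs'D⟩, ?_⟩
  calc a s * q ^ (j + 1) = a s * q ^ j * q := by rw [pow_succ, mul_assoc]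
    _ ≤ a s * q ^ j * ((s' - s) * g X) := by gcongr
    _ = (s' - s) * a s * (q ^ j * g X) := by ring
    _ ≤ a D / q ^ j / g X * (q ^ j * g X) := by gcongr; linarith
    _ = a D := by field_simp

theorem sublevelSup_le_succ_add (hq : 0 < q) (hD : 0 < D) (hapos : ∀ s ∈ Ioc 0 D, 0 < a s)
    (hgpos : ∀ x : ℝ, 0 < x → 0 < g x) (hgmono : MonotoneOn g (Ioi 0))
    (hfun : ∀ s t : ℝ, 0 < s → 0 < t → s + t < D → t * a s ≤ a (s + t) / g (1 / a (s + t)))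
    (j : ℕ) : sublevelSup a D q j ≤ sublevelSup a D q (j + 1) + q / g (q ^ j / a D) := by
  have hc : 0 < q / g (q ^ j / a D) :=
    div_pos hq (hgpos _ (div_pos (pow_pos hq j) (hapos D ⟨hD, le_rfl⟩)))
  refine Real.sSup_le (fun s' hs' => ?_) (add_nonneg (sublevelSup_nonneg _) hc.le)
  rw [← sub_le_iff_le_add]
  refine le_of_forall_lt_imp_le_of_dense fun s hs => ?_
  rcases le_or_gt s 0 with hs0 | hs0
  · exact hs0.trans (sublevelSup_nonneg _)
  · exact le_csSup (bddAbove_sublevelSet _)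
      (mem_sublevelSet_succ hq hapos hgpos hgmono hfun hs' hs0 (by linarith))

end Sublevel

theorem le_div_add_mul_integral_of_functional_ineq {a g : ℝ → ℝ} {D q : ℝ} (hq : 1 < q)
    (hD : 0 < D) (hapos : ∀ s ∈ Ioc 0 D, 0 < a s) (hamono : MonotoneOn a (Ioc 0 D))
    (hgpos : ∀ x : ℝ, 0 < x → 0 < g x) (hgmono : MonotoneOn g (Ioi 0))
    (hxg : MonotoneOn (fun x => x * g x) (Ioi 0))
    (hfun : ∀ s t : ℝ, 0 < s → 0 < t → s + t < D → t * a s ≤ a (s + t) / g (1 / a (s + t)))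
    (hint : IntegrableOn (fun x => 1 / (x * g x)) (Ioi (1 / a D))) :
    D ≤ q / g (1 / a D) + q ^ 2 / (q - 1) * ∫ x in Ioi (1 / a D), 1 / (x * g x) := by
  have haD : 0 < a D := hapos D ⟨hD, le_rfl⟩
  set c : ℕ → ℝ := fun j => q / g (q ^ j / a D)
  have hc : ∀ j, 0 ≤ c j := fun j =>
    div_nonneg (by linarith) (hgpos _ (div_pos (pow_pos (by linarith) j) haD)).le
  have htelescope : ∀ N, D - sublevelSup a D q N ≤ ∑ j ∈ range N, c j := fun N =>
    calc D - sublevelSup a D q N = sublevelSup a D q 0 - sublevelSup a D q N := by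
          rw [sublevelSup_zero hD hamono]
      _ = ∑ j ∈ range N, (sublevelSup a D q j - sublevelSup a D q (j + 1)) :=
          (sum_range_sub' _ N).symm
      _ ≤ ∑ j ∈ range N, c j := sum_le_sum fun j _ => sub_le_iff_le_add'.2
          (sublevelSup_le_succ_add (by linarith) hD hapos hgpos hgmono hfun j)
  have hsum : ∀ N, ∑ j ∈ range N, c (j + 1) ≤
      q ^ 2 / (q - 1) * ∫ x in Ioi (1 / a D), 1 / (x * g x) := fun N => by
    simpa only [c, mul_one_div] using
      sum_div_le_integral_one_div_mul hgpos hxg (one_div_pos.2 haD) hq hint N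
  refine le_of_forall_pos_le_add fun δ hδ => ?_
  obtain ⟨N, hN⟩ := exists_sublevelSup_le hq hD hapos hamono hδ
  have hc₀ : c 0 = q / g (1 / a D) := by simp [c]
  linarith [htelescope N, hsum N, hc N, sum_range_succ c N, sum_range_succ' c N]

theorem stmt_19_general (ε₀ : ℝ) (a g : ℝ → ℝ)
    (hapos : ∀ s : ℝ, 0 < s → s < ε₀ → 0 < a s)
    (hamono : MonotoneOn a (Set.Ioo 0 ε₀))
    (hgpos : ∀ x : ℝ, 0 < x → 0 < g x)
    (hgmono : MonotoneOn g (Set.Ioi (0 : ℝ)))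
    (hxg : MonotoneOn (fun x => x * g x) (Set.Ioi (0 : ℝ)))
    (hfun : ∀ s t : ℝ, 0 < s → s < ε₀ → 0 < t → t < ε₀ → s + t < ε₀ →
      t * a s ≤ a (s + t) / g (1 / a (s + t)))
    (D : ℝ) (hD0 : 0 < D) (hDε : D < ε₀)
    (hint : IntegrableOn (fun x : ℝ => 1 / (x * g x)) (Set.Ioi (1 / a D))) :
    D ≤ 3 * exp 1 / g (1 / a D)
      + (2 * exp 1 ^ 2 / (exp 1 - 1)) * ∫ x in Set.Ioi (1 / a D), 1 / (x * g x) := by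
  have he : 1 < exp 1 := one_lt_exp_iff.2 one_pos
  have haD : 0 < a D := hapos D hD0 hDε
  have hbound := le_div_add_mul_integral_of_functional_ineq he hD0
    (fun s hs => hapos s hs.1 (hs.2.trans_lt hDε))
    (hamono.mono fun s hs => ⟨hs.1, hs.2.trans_lt hDε⟩) hgpos hgmono hxg
    (fun s t hs ht hst => hfun s t hs (by linarith) ht (by linarith) (hst.trans hDε)) hint
  have hI : 0 ≤ ∫ x in Ioi (1 / a D), 1 / (x * g x) := setIntegral_nonneg measurableSet_Ioi
    fun x hx => have hx0 : 0 < x := (one_div_pos.2 haD).trans hx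
      (one_div_pos.2 (mul_pos hx0 (hgpos x hx0))).le
  have hg : 0 < g (1 / a D) := hgpos _ (one_div_pos.2 haD)
  calc D ≤ exp 1 / g (1 / a D) + exp 1 ^ 2 / (exp 1 - 1) * ∫ x in Ioi (1 / a D), 1 / (x * g x) :=
        hbound
    _ ≤ _ := by
        gcongr
        · linarith
        · linarith [sq_nonneg (exp 1)]

/-- Core analytic content of Theorem 5.4: if `a : (0,ε₀) → (0,∞)` is
increasing, `g` is positive increasing with `x·g(x)` increasing and
`∫ dx/(x g x)` finite, and `t·a(s) ≤ a(s+t)/g(1/a(s+t))` for all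
`0 < s, t < ε₀` with `s + t < ε₀`, then for every `0 < D < ε₀`,
`D ≤ 3e/g(1/a(D)) + (2e²/(e−1))·∫_{1/a(D)}^∞ dx/(x·g(x))`. -/
theorem stmt_19 (ε₀ : ℝ) (hε₀ : 0 < ε₀) (a g : ℝ → ℝ)
    (hapos : ∀ s : ℝ, 0 < s → s < ε₀ → 0 < a s)
    (hamono : MonotoneOn a (Set.Ioo 0 ε₀))
    (hgpos : ∀ x : ℝ, 0 < x → 0 < g x)
    (hgmono : MonotoneOn g (Set.Ioi (0 : ℝ)))
    (hxg : MonotoneOn (fun x => x * g x) (Set.Ioi (0 : ℝ)))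
    (hfun : ∀ s t : ℝ, 0 < s → s < ε₀ → 0 < t → t < ε₀ → s + t < ε₀ →
      t * a s ≤ a (s + t) / g (1 / a (s + t)))
    (D : ℝ) (hD0 : 0 < D) (hDε : D < ε₀)
    (hint : IntegrableOn (fun x : ℝ => 1 / (x * g x)) (Set.Ioi (1 / a D))) :
    D ≤ 3 * exp 1 / g (1 / a D)
      + (2 * exp 1 ^ 2 / (exp 1 - 1)) * ∫ x in Set.Ioi (1 / a D), 1 / (x * g x) :=
  stmt_19_general ε₀ a g hapos hamono hgpos hgmono hxg hfun D hD0 hDε hint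
end
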